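/- arXiv:math/0605240 — 3 statements merged into one kernel-verified Lean document; each statement's English description precedes it below -/
import Mathlib

section
/- Let (X, μ) be a measure space, let n ≥ 1, and let f₁, …, fₙ : X → ℝ be bounded measurable functions. Define f : X → ℝ by f(x) = sqrt(f₁(x)² + ⋯ + fₙ(x)²). Then, regarding the ℂ-valued versions of f₁, …, fₙ and f as elements of the ring L^∞(X, μ; ℂ), the ideal of L^∞(X, μ; ℂ) generated by the classes [f₁], …, [fₙ] is equal to the principal ideal generated by the class [f]. -/
open MeasureTheory
open scoped ENNReal

noncomputable instance AEEqFunComplex.instCommRing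
    {α : Type*} [MeasurableSpace α] {μ : Measure α} : CommRing (α →ₘ[μ] ℂ) :=
  { AEEqFun.instAddCommGroup, AEEqFun.instCommMonoid with
    left_distrib := fun a b c => AEEqFun.toGerm_injective <| by
      simp only [AEEqFun.mul_toGerm, AEEqFun.add_toGerm, mul_add]
    right_distrib := fun a b c => AEEqFun.toGerm_injective <| by
      simp only [AEEqFun.mul_toGerm, AEEqFun.add_toGerm, add_mul]
    zero_mul := fun a => AEEqFun.toGerm_injective <| by
      simp only [AEEqFun.mul_toGerm, AEEqFun.zero_toGerm, zero_mul]
    mul_zero := fun a => AEEqFun.toGerm_injective <| by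
      simp only [AEEqFun.mul_toGerm, AEEqFun.zero_toGerm, mul_zero] }

/-- The ring `L^∞(α, μ; ℂ)` of essentially bounded measurable complex-valued functions
modulo `μ`-a.e. equality, realized as a subring of the ring of a.e. equivalence classes
of functions. -/
noncomputable def Linfty {α : Type*} [MeasurableSpace α] (μ : Measure α) :
    Subring (α →ₘ[μ] ℂ) where
  carrier := {f : α →ₘ[μ] ℂ | eLpNorm (f : α → ℂ) ∞ μ < ⊤}
  zero_mem' := by
    simp only [Set.mem_setOf_eq]
    rw [eLpNorm_congr_ae AEEqFun.coeFn_zero, eLpNorm_zero]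
    exact ENNReal.zero_lt_top
  add_mem' := by
    intro a b ha hb
    simp only [Set.mem_setOf_eq] at *
    calc eLpNorm (↑(a + b) : α → ℂ) ∞ μ
        = eLpNorm ((a : α → ℂ) + (b : α → ℂ)) ∞ μ :=
          eLpNorm_congr_ae (AEEqFun.coeFn_add a b)
      _ ≤ eLpNorm (a : α → ℂ) ∞ μ + eLpNorm (b : α → ℂ) ∞ μ :=
          eLpNorm_add_le a.aestronglyMeasurable b.aestronglyMeasurable le_top
      _ < ⊤ := ENNReal.add_lt_top.2 ⟨ha, hb⟩
  neg_mem' := by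
    intro a ha
    simp only [Set.mem_setOf_eq] at *
    calc eLpNorm (↑(-a) : α → ℂ) ∞ μ
        = eLpNorm (-(a : α → ℂ)) ∞ μ := eLpNorm_congr_ae (AEEqFun.coeFn_neg a)
      _ = eLpNorm (a : α → ℂ) ∞ μ := eLpNorm_neg _ _ _
      _ < ⊤ := ha
  one_mem' := by
    simp only [Set.mem_setOf_eq]
    rw [eLpNorm_congr_ae (AEEqFun.coeFn_one (β := ℂ))]
    exact (memLp_top_const (1 : ℂ)).2
  mul_mem' := by
    intro a b ha hb
    simp only [Set.mem_setOf_eq] at *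
    calc eLpNorm (↑(a * b) : α → ℂ) ∞ μ
        = eLpNorm (fun x => (a : α → ℂ) x * (b : α → ℂ) x) ∞ μ :=
          eLpNorm_congr_ae (AEEqFun.coeFn_mul a b)
      _ ≤ eLpNorm (a : α → ℂ) ∞ μ * eLpNorm (b : α → ℂ) ∞ μ :=
          eLpNorm_le_eLpNorm_top_mul_eLpNorm ∞ (a : α → ℂ) b.aestronglyMeasurable
            (· * ·) 1 (Filter.Eventually.of_forall fun x => by simp [nnnorm_mul]) |>.trans_eq
              (by simp)
      _ < ⊤ := ENNReal.mul_lt_top ha hb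

/-!
With `s = √(∑ fᵢ²)`, the quotients `gᵢ = fᵢ / s` are measurable and bounded by `1`, hence lie in
`L^∞`. Pointwise `fᵢ = gᵢ s` (both sides vanish where `s = 0`) and `s = ∑ gᵢ fᵢ`, so `[s]` divides
every `[fᵢ]` and lies in the ideal they generate.
-/

open Filter

theorem Ideal.span_range_eq_span_singleton_of_sum_mul_eq {R ι : Type*} [CommSemiring R]
    [Fintype ι] {a : ι → R} {s : R} (g : ι → R) (hdvd : ∀ i, s ∣ a i)
    (hsum : ∑ i, g i * a i = s) :
    Ideal.span (Set.range a) = Ideal.span {s} := by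
  apply le_antisymm
  · rw [Ideal.span_le]
    rintro _ ⟨i, rfl⟩
    exact Ideal.mem_span_singleton.2 (hdvd i)
  · rw [Ideal.span_singleton_le_iff_mem, ← hsum]
    exact Ideal.sum_mem _ fun i _ => Ideal.mul_mem_left _ _ (Ideal.subset_span ⟨i, rfl⟩)

section SqrtSumSq

variable {ι : Type*} [Fintype ι] (a : ι → ℝ)

theorem abs_le_sqrt_sum_sq (i : ι) : |a i| ≤ √(∑ j, a j ^ 2) := by
  rw [← Real.sqrt_sq_eq_abs]
  exact Real.sqrt_le_sqrt (Finset.single_le_sum (fun j _ => sq_nonneg (a j)) (Finset.mem_univ i))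

theorem abs_div_sqrt_sum_sq_le_one (i : ι) : |a i / √(∑ j, a j ^ 2)| ≤ 1 := by
  rw [abs_div, abs_of_nonneg (Real.sqrt_nonneg _)]
  exact div_le_one_of_le₀ (abs_le_sqrt_sum_sq a i) (Real.sqrt_nonneg _)

theorem div_sqrt_sum_sq_mul_self (i : ι) :
    a i / √(∑ j, a j ^ 2) * √(∑ j, a j ^ 2) = a i := by
  by_cases hs : √(∑ j, a j ^ 2) = 0
  · have := abs_le_sqrt_sum_sq a i
    rw [hs, abs_nonpos_iff] at this
    rw [hs, mul_zero, this]
  · exact div_mul_cancel₀ _ hs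

theorem sum_div_sqrt_sum_sq_mul_self :
    ∑ i, a i / √(∑ j, a j ^ 2) * a i = √(∑ j, a j ^ 2) := by
  simp_rw [div_mul_eq_mul_div, ← sq, ← Finset.sum_div]
  set t := √(∑ j, a j ^ 2)
  rw [← Real.mul_self_sqrt (Finset.sum_nonneg fun j _ => sq_nonneg (a j)), mul_self_div_self]

end SqrtSumSq

noncomputable section

namespace Linfty

variable {X : Type*} [MeasurableSpace X] {μ : Measure X}

def ofMemLp {g : X → ℂ} (hg : MemLp g ∞ μ) : Linfty μ :=
  ⟨AEEqFun.mk g hg.1, by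
    show eLpNorm _ ∞ μ < ⊤
    rw [eLpNorm_congr_ae (AEEqFun.coeFn_mk _ _)]
    exact hg.2⟩

variable (μ) in
def toGerm : Linfty μ →+* Germ (ae μ) ℂ where
  toFun F := (F : X →ₘ[μ] ℂ).toGerm
  map_one' := AEEqFun.one_toGerm
  map_mul' _ _ := AEEqFun.mul_toGerm _ _
  map_zero' := AEEqFun.zero_toGerm
  map_add' _ _ := AEEqFun.add_toGerm _ _

theorem toGerm_injective : Function.Injective (toGerm μ) :=
  fun _ _ h => Subtype.ext (AEEqFun.toGerm_injective h)

theorem toGerm_eq_of_ae_eq {F : Linfty μ} {u : X → ℂ} (h : (F : X → ℂ) =ᵐ[μ] u) :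
    toGerm μ F = u :=
  (AEEqFun.toGerm_eq _).trans (Germ.coe_eq.2 h)

theorem toGerm_ofMemLp {g : X → ℂ} (hg : MemLp g ∞ μ) : toGerm μ (ofMemLp hg) = g :=
  AEEqFun.mk_toGerm _ _

end Linfty

end

theorem stmt6_general {X : Type*} [MeasurableSpace X] (μ : Measure X) {n : ℕ}
    (f : Fin n → X → ℝ)
    (hmeas : ∀ i, Measurable (f i))
    (F : Fin n → ↥(Linfty μ))
    (hF : ∀ i, ((F i : X →ₘ[μ] ℂ) : X → ℂ) =ᵐ[μ] fun x => ((f i x : ℝ) : ℂ))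
    (Fs : ↥(Linfty μ))
    (hFs : ((Fs : X →ₘ[μ] ℂ) : X → ℂ) =ᵐ[μ]
      fun x => ((Real.sqrt (∑ i, f i x ^ 2) : ℝ) : ℂ)) :
    Ideal.span (Set.range F) = Ideal.span {Fs} := by
  have hG (i : Fin n) : MemLp (fun x => ((f i x / √(∑ j, f j x ^ 2) : ℝ) : ℂ)) ∞ μ :=
    memLp_top_of_bound (Measurable.aestronglyMeasurable (by fun_prop)) 1 (.of_forall fun x => by
      simpa only [Complex.norm_real, Real.norm_eq_abs] using abs_div_sqrt_sum_sq_le_one (f · x) i)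
  have hFgerm (i : Fin n) := Linfty.toGerm_eq_of_ae_eq (hF i)
  refine Ideal.span_range_eq_span_singleton_of_sum_mul_eq (fun i => Linfty.ofMemLp (hG i))
    (fun i => ⟨Linfty.ofMemLp (hG i), Linfty.toGerm_injective ?_⟩) (Linfty.toGerm_injective ?_)
  · rw [map_mul, hFgerm, Linfty.toGerm_eq_of_ae_eq hFs, Linfty.toGerm_ofMemLp, ← Germ.coe_mul]
    congr 1
    funext x
    rw [Pi.mul_apply, mul_comm, ← Complex.ofReal_mul]
    exact congrArg _ (div_sqrt_sum_sq_mul_self (f · x) i).symm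
  · simp only [map_sum, map_mul, hFgerm, Linfty.toGerm_ofMemLp, ← Germ.coe_mul]
    rw [← Germ.coe_coeRingHom, ← map_sum, Germ.coe_coeRingHom, Linfty.toGerm_eq_of_ae_eq hFs]
    congr 1
    funext x
    simp only [Finset.sum_apply, Pi.mul_apply, ← Complex.ofReal_mul, ← Complex.ofReal_sum]
    exact congrArg _ (sum_div_sqrt_sum_sq_mul_self (f · x))

/-- Let `(X, μ)` be a measure space and `f₁, …, fₙ : X → ℝ` bounded measurable
functions, `n ≥ 1`.  Let `f = sqrt (f₁² + ⋯ + fₙ²)`.  Then, in the ring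
`L^∞(X, μ; ℂ)`, the ideal generated by the classes `[f₁], …, [fₙ]` equals the
principal ideal generated by `[f]`.  The classes are specified through a.e. equality of
representatives. -/
theorem stmt6 {X : Type*} [MeasurableSpace X] (μ : Measure X) {n : ℕ} (hn : 1 ≤ n)
    (f : Fin n → X → ℝ)
    (hmeas : ∀ i, Measurable (f i)) (hbdd : ∀ i, ∃ C : ℝ, ∀ x, |f i x| ≤ C)
    (F : Fin n → ↥(Linfty μ))
    (hF : ∀ i, ((F i : X →ₘ[μ] ℂ) : X → ℂ) =ᵐ[μ] fun x => ((f i x : ℝ) : ℂ))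
    (Fs : ↥(Linfty μ))
    (hFs : ((Fs : X →ₘ[μ] ℂ) : X → ℂ) =ᵐ[μ]
      fun x => ((Real.sqrt (∑ i, f i x ^ 2) : ℝ) : ℂ)) :
    Ideal.span (Set.range F) = Ideal.span {Fs} :=
  stmt6_general μ f hmeas F hF Fs hFs
end

section
/- Let n ≥ 1, let V ⊆ ℝⁿ be open, convex and nonempty, and let f : ℝⁿ → ℝ be analytic on V (analytic in a neighborhood of each point of V). If f is not identically zero on V, then the set N = {x ∈ V : f(x) = 0} has Lebesgue measure zero. -/
/-!
By the Lebesgue density theorem almost every point of a set `Z` is a density point of `Z`, and at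
a density point the tangent cone of `Z` is the whole space, so a function vanishing on `Z` has
vanishing derivative there. Iterating, almost every zero of `f` is a zero of all the iterated
derivatives of `f`. If the zero set had positive measure, such a point would exist in `V`; there
the Taylor series of `f` vanishes, so `f` vanishes near it, and by the identity theorem on the
connected set `V`, everywhere on `V`.
-/

open MeasureTheory

open Filter Metric Set Topology

section DensityPoint

variable {E F : Type*} [NormedAddCommGroup E] [NormedSpace ℝ E] [FiniteDimensional ℝ E]
  [MeasurableSpace E] [BorelSpace E] {μ : Measure E} [μ.IsAddHaarMeasure]
  [NormedAddCommGroup F] [NormedSpace ℝ F]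

theorem tangentConeAt_eq_univ_of_density_one {s : Set E} {x : E}
    (hx : Tendsto (fun r => μ (s ∩ closedBall x r) / μ (closedBall x r)) (𝓝[>] 0) (𝓝 1)) :
    tangentConeAt ℝ s x = univ := by
  refine eq_univ_of_forall fun v => ?_
  -- `v = lim r⁻¹ • (r • w)` along `r → 0⁺`, `w → v`; density puts `x + r • w` in `s` frequently
  refine mem_tangentConeAt_of_frequently (𝓝[>] (0 : ℝ) ×ˢ 𝓝 v) (fun p => p.1⁻¹)
    (fun p => p.1 • p.2) ?_ ?_ ?_
  · have : Tendsto (fun p : ℝ × E => p.1 • p.2) (𝓝 (0, v)) (𝓝 ((0 : ℝ) • v)) :=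
      (continuous_fst.smul continuous_snd).tendsto _
    rw [zero_smul, nhds_prod_eq] at this
    exact this.mono_left (prod_mono_left _ nhdsWithin_le_nhds)
  · rw [Filter.Frequently, eventually_prod_iff]
    rintro ⟨pa, hpa, pb, hpb, hnot⟩
    obtain ⟨ε, hε, hball⟩ := Metric.mem_nhds_iff.1 hpb
    obtain ⟨r, ⟨y, hys, hy⟩, hr⟩ :=
      ((Measure.eventually_nonempty_inter_smul_of_density_one μ s x hx (ball v ε)
        measurableSet_ball (measure_ball_pos μ v hε).ne').and hpa).exists
    obtain ⟨_, rfl, _, ⟨w, hw, rfl⟩, rfl⟩ := hy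
    exact hnot hr (hball hw) hys
  · refine tendsto_snd.congr' ?_
    filter_upwards [prod_mem_prod self_mem_nhdsWithin univ_mem] with p hp
    simp [smul_smul, inv_mul_cancel₀ (mem_Ioi.1 hp.1).ne']

theorem uniqueDiffWithinAt_of_density_one {s : Set E} {x : E}
    (hx : Tendsto (fun r => μ (s ∩ closedBall x r) / μ (closedBall x r)) (𝓝[>] 0) (𝓝 1)) :
    UniqueDiffWithinAt ℝ s x := by
  have hcone := tangentConeAt_eq_univ_of_density_one hx
  exact ⟨by simp [hcone], mem_closure_of_nonempty_tangentConeAt (𝕜 := ℝ) (by simp [hcone])⟩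

-- No smoothness of `g` is needed: `fderiv` is `0` wherever `g` is not differentiable.
variable (μ) in
theorem ae_fderiv_eq_zero_of_eq_zero (g : E → F) : ∀ᵐ x ∂μ, g x = 0 → fderiv ℝ g x = 0 := by
  filter_upwards [ae_imp_of_ae_restrict (Besicovitch.ae_tendsto_measure_inter_div μ {x | g x = 0})]
    with x hx hgx
  by_cases hd : DifferentiableAt ℝ g x
  · have hconst : HasFDerivWithinAt g (0 : E →L[ℝ] F) {x | g x = 0} x :=
      (hasFDerivWithinAt_const 0 x _).congr (fun y hy => hy) hgx
    exact (uniqueDiffWithinAt_of_density_one (hx hgx)).eq hd.hasFDerivAt.hasFDerivWithinAt hconst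
  · exact fderiv_zero_of_not_differentiableAt hd

variable (μ) in
theorem ae_iteratedFDeriv_eq_zero_of_eq_zero (f : E → F) (k : ℕ) :
    ∀ᵐ x ∂μ, f x = 0 → iteratedFDeriv ℝ k f x = 0 := by
  induction k with
  | zero => exact ae_of_all _ fun x hx => by ext; simp [hx]
  | succ k ih =>
    filter_upwards [ih, ae_fderiv_eq_zero_of_eq_zero μ (iteratedFDeriv ℝ k f)] with x hk hd hfx
    rw [iteratedFDeriv_succ_eq_comp_left, Function.comp_apply, hd (hk hfx),
      LinearIsometryEquiv.map_zero]

end DensityPoint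

theorem AnalyticAt.eventuallyEq_zero_of_iteratedFDeriv_eq_zero {𝕜 E F : Type*}
    [NontriviallyNormedField 𝕜] [CharZero 𝕜] [NormedAddCommGroup E] [NormedSpace 𝕜 E]
    [NormedAddCommGroup F] [NormedSpace 𝕜 F] [CompleteSpace F] {f : E → F} {x : E}
    (hf : AnalyticAt 𝕜 f x) (h : ∀ k, iteratedFDeriv 𝕜 k f x = 0) : f =ᶠ[𝓝 x] 0 := by
  obtain ⟨p, r, hp⟩ := hf
  filter_upwards [Metric.eball_mem_nhds x hp.r_pos] with y hy
  have hsum := hp.hasSum_iteratedFDeriv (y := y - x) (by simpa [edist_eq_enorm_sub] using hy)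
  simp only [h, zero_apply, smul_zero, add_sub_cancel] at hsum
  exact hsum.unique hasSum_zero

theorem AnalyticOnNhd.eqOn_zero_of_preconnected_of_measure_ne_zero {E F : Type*}
    [NormedAddCommGroup E] [NormedSpace ℝ E] [FiniteDimensional ℝ E] [MeasurableSpace E]
    [BorelSpace E] (μ : Measure E) [μ.IsAddHaarMeasure] [NormedAddCommGroup F]
    [NormedSpace ℝ F] [CompleteSpace F] {f : E → F} {U : Set E} (hf : AnalyticOnNhd ℝ f U)
    (hU : IsPreconnected U) (hμ : μ {x ∈ U | f x = 0} ≠ 0) : EqOn f 0 U := by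
  have hae : ∀ᵐ x ∂μ, ∀ k, f x = 0 → iteratedFDeriv ℝ k f x = 0 :=
    ae_all_iff.2 (ae_iteratedFDeriv_eq_zero_of_eq_zero μ f)
  obtain ⟨x₀, hx₀U, hx₀⟩ : ∃ x ∈ U, ∀ k, iteratedFDeriv ℝ k f x = 0 := by
    by_contra! h
    refine hμ (measure_mono_null (fun x hx => ?_) (ae_iff.1 hae))
    obtain ⟨k, hk⟩ := h x hx.1
    exact fun hall => hk (hall k hx.2)
  exact hf.eqOn_zero_of_preconnected_of_eventuallyEq_zero hU hx₀U
    ((hf x₀ hx₀U).eventuallyEq_zero_of_iteratedFDeriv_eq_zero hx₀)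

theorem stmt7_general {n : ℕ} (V : Set (EuclideanSpace ℝ (Fin n)))
    (hVconv : Convex ℝ V)
    (f : EuclideanSpace ℝ (Fin n) → ℝ)
    (hf : ∀ x ∈ V, AnalyticAt ℝ f x)
    (hnz : ¬ ∀ x ∈ V, f x = 0) :
    volume {x ∈ V | f x = 0} = 0 := by
  by_contra h
  exact hnz (AnalyticOnNhd.eqOn_zero_of_preconnected_of_measure_ne_zero volume hf
    hVconv.isPreconnected h)

/-- If `V ⊆ ℝⁿ` is open, convex and nonempty and `f : ℝⁿ → ℝ` is analytic at every point
of `V` and not identically zero on `V`, then the zero set of `f` in `V` has Lebesgue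
measure zero. -/
theorem stmt7 {n : ℕ} (hn : 1 ≤ n) (V : Set (EuclideanSpace ℝ (Fin n)))
    (hVopen : IsOpen V) (hVconv : Convex ℝ V) (hVne : V.Nonempty)
    (f : EuclideanSpace ℝ (Fin n) → ℝ)
    (hf : ∀ x ∈ V, AnalyticAt ℝ f x)
    (hnz : ¬ ∀ x ∈ V, f x = 0) :
    volume {x ∈ V | f x = 0} = 0 :=
  stmt7_general V hVconv f hf hnz
end

section
/- Let R be a ring equipped with a topology for which addition and negation are continuous and, for every r ∈ R, both left multiplication x ↦ r·x and right multiplication x ↦ x·r are continuous. Let A be a dense subring of R, let I be a two-sided ideal of A, and let J be the left ideal of R generated by I. Then the topological closure of J in R is a two-sided ideal of R. -/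
/-- Let `R` be a ring with a topology for which addition and negation are continuous and
multiplication is separately continuous, let `A` be a dense subring, `I` a two-sided
ideal of `A` and `J` the left ideal of `R` generated by `I`. Then the closure of `J` is
a two-sided ideal of `R`. -/
theorem stmt11 {R : Type*} [Ring R] [TopologicalSpace R]
    [ContinuousAdd R] [ContinuousNeg R]
    (hmul_left : ∀ r : R, Continuous fun x => r * x)
    (hmul_right : ∀ r : R, Continuous fun x => x * r)
    (A : Subring R) (hA : Dense (A : Set R))
    (I : TwoSidedIdeal ↥A)
    (J : Ideal R) (hJ : J = Ideal.span ((fun a : ↥A => (a : R)) '' (I : Set ↥A))) :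
    ∃ K : TwoSidedIdeal R, (K : Set R) = closure (J : Set R) := by
  -- J absorbs right multiplication by elements of A
  have key : ∀ x ∈ J, ∀ a : ↥A, x * (a : R) ∈ J := by
    intro x hx a
    rw [hJ] at hx ⊢
    refine Submodule.span_induction ?_ ?_ ?_ ?_ hx
    · rintro _ ⟨b, hb, rfl⟩
      exact Ideal.subset_span ⟨b * a, I.mul_mem_right _ _ hb, rfl⟩
    · simp
    · intro y z _ _ hy hz
      rw [add_mul]; exact Ideal.add_mem _ hy hz
    · intro r y _ hy
      rw [smul_eq_mul, mul_assoc]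
      exact Ideal.mul_mem_left _ _ hy
  -- J absorbs right multiplication by any element of R, up to closure
  have key2 : ∀ x ∈ J, ∀ r : R, x * r ∈ closure (J : Set R) := by
    intro x hx r
    have : r ∈ closure (A : Set R) := hA r
    exact map_mem_closure (hmul_left x) this (fun a ha => key x hx ⟨a, ha⟩)
  refine ⟨TwoSidedIdeal.mk' (closure (J : Set R))
    (subset_closure J.zero_mem)
    (fun {x y} hx hy => ?_) (fun {x} hx => ?_) (fun {x y} hy => ?_) (fun {x y} hx => ?_),
    TwoSidedIdeal.coe_mk' _ _ _ _ _ _⟩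
  · have : (x, y) ∈ closure ((J : Set R) ×ˢ (J : Set R)) := by
      rw [closure_prod_eq]; exact ⟨hx, hy⟩
    exact map_mem_closure (f := fun p : R × R => p.1 + p.2)
      (continuous_fst.add continuous_snd) this
      (fun p (hp : p ∈ (J : Set R) ×ˢ (J : Set R)) => J.add_mem hp.1 hp.2)
  · exact map_mem_closure (f := fun a : R => -a) continuous_neg hx (fun a ha => J.neg_mem ha)
  · exact map_mem_closure (hmul_left x) hy (fun a ha => J.mul_mem_left x ha)
  · have : x * y ∈ closure (closure (J : Set R)) :=
      map_mem_closure (f := fun a => a * y) (hmul_right y) hx (fun a ha => key2 a ha y)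
    rwa [closure_closure] at this
end
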